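/- Let σ be sampled from the general nearest-neighbor spin system on the torus 𝕋_L^d with spin space (S,𝒮,λ) and interaction h. Define V₀ := {v ∈ Λ : v₁ ∉ {1,…,L−1}} and the reflection R : Λ → Λ by R(v) := (−v₁, v₂, …, v_d) if v₁ ≠ L and R(v) := (L, v₂, …, v_d) if v₁ = L, and set (Rσ)_v := σ_{R(v)}. Then for every bounded measurable function f : S^Λ → ℂ such that f(σ) depends only on the restriction σ|_{V₀}, the expectation E(f(σ) · conj(f(Rσ))) is a non-negative real number. (Reflection positivity through vertices.) -/

import Mathlib

/-!
The reflection `R : v ↦ (-v₁, v₂, …)` is a graph automorphism fixing the two hyperplanes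
`v₁ ∈ {0, L}`; it swaps the slab `A = {v₁ ∈ {1, …, L-1}}` with `R(A)`, and no edge joins `A`
to `R(A)`. Write a configuration as `(p, s, t)`, where `p` is its restriction to the hyperplanes,
`s` its restriction to `A` and `t` that of `σ ∘ R` to `A`. Splitting the edges into those meeting
`A`, those meeting `R(A)` and those inside the hyperplanes, the Boltzmann weight factors as
`w(p) B(p, s) B(p, t)` with `w ≥ 0`, while `f(σ)` depends only on `(p, t)` and `f(Rσ)` only on
`(p, s)`. By Fubini the numerator is `∫ w(p) |∫ f(p, t) B(p, t) dt|² dp ≥ 0`.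
-/

open MeasureTheory
open scoped BigOperators

/-- The `d`-dimensional discrete torus of side length `m` (for `m = 2L` this is `𝕋_L^d`):
vertices are `(ZMod m)^d` and two vertices are adjacent when they agree in all but one
coordinate and differ by exactly `1` modulo `m` in that coordinate. -/
def torusGraph (d m : ℕ) : SimpleGraph (Fin d → ZMod m) where
  Adj u v := u ≠ v ∧ ∃ i, (∀ j, j ≠ i → u j = v j) ∧ (u i = v i + 1 ∨ v i = u i + 1)
  symm := by
    constructor
    rintro u v ⟨hne, i, hji, hi⟩
    exact ⟨hne.symm, i, fun j hj => (hji j hj).symm, hi.symm⟩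
  loopless := by constructor; rintro u ⟨hne, -⟩; exact hne rfl

instance torusAdjDecidable (d m : ℕ) : DecidableRel (torusGraph d m).Adj := fun u v =>
  inferInstanceAs
    (Decidable (u ≠ v ∧ ∃ i, (∀ j, j ≠ i → u j = v j) ∧ (u i = v i + 1 ∨ v i = u i + 1)))

/-- The Boltzmann weight `∏_{{u,v} ∈ E(𝕋)} h(σ_u, σ_v)` of a configuration of the general
nearest-neighbour spin system with (symmetric) interaction `h` on the discrete torus. -/
noncomputable def nnWeight (d m : ℕ) [NeZero m] {S : Type} (h : S → S → ℝ)
    (hsymm : ∀ a b, h a b = h b a) (σ : (Fin d → ZMod m) → S) : ℝ :=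
  ∏ e ∈ (torusGraph d m).edgeFinset,
    Sym2.lift ⟨fun u v => h (σ u) (σ v), fun u v => hsymm (σ u) (σ v)⟩ e

open scoped ComplexOrder

theorem integral_mul_conj_mul_nonneg {X Y : Type*} [MeasurableSpace X] [MeasurableSpace Y]
    (μ : Measure X) (ν : Measure Y) [SFinite μ] [SFinite ν] {w : X → ℝ} (hw : ∀ x, 0 ≤ w x)
    (g : X → Y → ℂ) :
    0 ≤ ∫ z : X × Y × Y, (w z.1 : ℂ) * (starRingEnd ℂ (g z.1 z.2.1) * g z.1 z.2.2)
      ∂μ.prod (ν.prod ν) := by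
  by_cases hint : Integrable
      (fun z : X × Y × Y => (w z.1 : ℂ) * (starRingEnd ℂ (g z.1 z.2.1) * g z.1 z.2.2))
      (μ.prod (ν.prod ν))
  · have inner : ∀ x, ∫ y : Y × Y, (w x : ℂ) * (starRingEnd ℂ (g x y.1) * g x y.2) ∂ν.prod ν =
        ((w x * Complex.normSq (∫ y, g x y ∂ν) : ℝ) : ℂ) := fun x => by
      rw [integral_const_mul, integral_prod_mul (fun y => starRingEnd ℂ (g x y)) (g x),
        integral_conj, ← Complex.normSq_eq_conj_mul_self, Complex.ofReal_mul]
    rw [integral_prod _ hint]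
    simp only [inner]
    rw [integral_complex_ofReal, Complex.zero_le_real]
    exact integral_nonneg fun x => mul_nonneg (hw x) (Complex.normSq_nonneg _)
  · rw [integral_undef hint]

def edgeWeight {V S : Type*} (h : S → S → ℝ) (hsymm : ∀ a b, h a b = h b a) (σ : V → S) :
    Sym2 V → ℝ :=
  Sym2.lift ⟨fun u v => h (σ u) (σ v), fun u v => hsymm (σ u) (σ v)⟩

section edgeWeight

variable {V S : Type*} {h : S → S → ℝ} {hsymm : ∀ a b, h a b = h b a}

theorem edgeWeight_nonneg (hnonneg : ∀ a b, 0 ≤ h a b) (σ : V → S) (e : Sym2 V) :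
    0 ≤ edgeWeight h hsymm σ e := by
  induction e using Sym2.ind with
  | _ u v => exact hnonneg _ _

theorem edgeWeight_congr {σ τ : V → S} {e : Sym2 V} (hστ : ∀ v ∈ e, σ v = τ v) :
    edgeWeight h hsymm σ e = edgeWeight h hsymm τ e := by
  induction e using Sym2.ind with
  | _ u v => exact congrArg₂ h (hστ u (Sym2.mem_mk_left u v)) (hστ v (Sym2.mem_mk_right u v))

theorem edgeWeight_map (σ : V → S) (R : V → V) (e : Sym2 V) :
    edgeWeight h hsymm σ (e.map R) = edgeWeight h hsymm (σ ∘ R) e := by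
  induction e using Sym2.ind with
  | _ u v => rfl

end edgeWeight

namespace SimpleGraph

variable {V : Type*}

structure IsReflection (G : SimpleGraph V) (R : V → V) (A : Set V) : Prop where
  involutive : Function.Involutive R
  map_notMem : ∀ ⦃v⦄, v ∈ A → R v ∉ A
  map_eq_self : ∀ ⦃v⦄, v ∉ A → R v ∉ A → R v = v
  map_adj : ∀ ⦃u v⦄, G.Adj u v → G.Adj (R u) (R v)
  not_adj : ∀ ⦃u v⦄, u ∈ A → R v ∈ A → ¬ G.Adj u v

namespace IsReflection

variable {G : SimpleGraph V} {R : V → V} {A : Set V} {S : Type*}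

theorem map_mem_edgeSet (hR : G.IsReflection R A) {e : Sym2 V} (he : e ∈ G.edgeSet) :
    e.map R ∈ G.edgeSet := by
  induction e using Sym2.ind with
  | _ u v => exact hR.map_adj he

theorem map_notMem_of_mem_edgeSet (hR : G.IsReflection R A) {e : Sym2 V}
    (he : e ∈ G.edgeSet) {u w : V} (hu : u ∈ e) (huA : u ∈ A) (hw : w ∈ e) : R w ∉ A := by
  rcases eq_or_ne w u with rfl | hwu
  · exact hR.map_notMem huA
  · obtain rfl := (Sym2.mem_and_mem_iff hwu.symm).mp ⟨hu, hw⟩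
    exact fun hwA => hR.not_adj huA hwA he

section weight

variable [Fintype V] [DecidableEq V] [DecidableRel G.Adj] {h : S → S → ℝ}
  {hsymm : ∀ a b, h a b = h b a}

open Classical in
theorem prod_edgeWeight_comp (hR : G.IsReflection R A) (σ : V → S) :
    ∏ e ∈ G.edgeFinset with ∃ v ∈ e, v ∈ A, edgeWeight h hsymm (σ ∘ R) e =
      ∏ e ∈ G.edgeFinset with ∃ v ∈ e, R v ∈ A, edgeWeight h hsymm σ e := by
  have hmap (e : Sym2 V) : (e.map R).map R = e := by
    rw [Sym2.map_map, hR.involutive.comp_self, Sym2.map_id, id]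
  refine Finset.prod_nbij' (Sym2.map R) (Sym2.map R) ?_ ?_ (fun e _ => hmap e) (fun e _ => hmap e)
    fun e _ => (edgeWeight_map σ R e).symm
  all_goals
    simp only [Finset.mem_filter, mem_edgeFinset]
    rintro e ⟨he, u, hu, huA⟩
    refine ⟨hR.map_mem_edgeSet he, R u, Sym2.mem_map.2 ⟨u, hu, rfl⟩, ?_⟩
  · rwa [hR.involutive]
  · exact huA

open Classical in
theorem prod_edgeWeight_eq (hR : G.IsReflection R A) (σ : V → S) :
    ∏ e ∈ G.edgeFinset, edgeWeight h hsymm σ e =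
      (∏ e ∈ G.edgeFinset with ∃ v ∈ e, v ∈ A, edgeWeight h hsymm σ e) *
      (∏ e ∈ G.edgeFinset with ∃ v ∈ e, v ∈ A, edgeWeight h hsymm (σ ∘ R) e) *
      ∏ e ∈ G.edgeFinset with ∀ v ∈ e, v ∉ A ∧ R v ∉ A, edgeWeight h hsymm σ e := by
  rw [← Finset.prod_filter_mul_prod_filter_not G.edgeFinset (fun e => ∃ v ∈ e, v ∈ A),
    ← Finset.prod_filter_mul_prod_filter_not (G.edgeFinset.filter fun e => ¬ ∃ v ∈ e, v ∈ A)
      (fun e => ∃ v ∈ e, R v ∈ A), mul_assoc, hR.prod_edgeWeight_comp, Finset.filter_filter,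
    Finset.filter_filter]
  congr 3 <;> refine Finset.filter_congr fun e he => ?_
  · refine and_iff_right_of_imp fun ⟨u, hu, hRu⟩ ⟨w, hw, hwA⟩ => ?_
    exact hR.map_notMem_of_mem_edgeSet (mem_edgeFinset.1 he) hw hwA hu hRu
  · simp only [not_exists, not_and, ← forall_and]

end weight

open Classical in
noncomputable def vertexEquiv (hR : G.IsReflection R A) :
    {v // v ∉ A ∧ R v ∉ A} ⊕ (A ⊕ A) ≃ V where
  toFun := Sum.elim Subtype.val (Sum.elim Subtype.val fun a => R a)
  invFun v :=
    if hv : v ∈ A then .inr (.inl ⟨v, hv⟩)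
    else if hRv : R v ∈ A then .inr (.inr ⟨R v, hRv⟩)
    else .inl ⟨v, hv, hRv⟩
  left_inv := by
    rintro (⟨v, hv, hRv⟩ | ⟨v, hv⟩ | ⟨v, hv⟩)
    · simp [hv, hRv]
    · simp [hv]
    · simp [hR.map_notMem hv, hR.involutive v, hv]
  right_inv v := by
    by_cases hv : v ∈ A
    · simp [hv]
    by_cases hRv : R v ∈ A
    · simp [hv, hRv, hR.involutive v]
    · simp [hv, hRv]

section splitConfig

variable (hR : G.IsReflection R A) (S) [MeasurableSpace S]

noncomputable def splitConfig :
    (({v // v ∉ A ∧ R v ∉ A} → S) × ((A → S) × (A → S))) ≃ᵐ (V → S) :=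
  (MeasurableEquiv.prodCongr (MeasurableEquiv.refl _)
      (MeasurableEquiv.sumPiEquivProdPi fun _ => S).symm).trans
    ((MeasurableEquiv.sumPiEquivProdPi fun _ => S).symm.trans
      (MeasurableEquiv.piCongrLeft (fun _ => S) hR.vertexEquiv))

variable {S}

theorem splitConfig_apply_vertexEquiv (p : {v // v ∉ A ∧ R v ∉ A} → S) (s t : A → S)
    (x : {v // v ∉ A ∧ R v ∉ A} ⊕ (A ⊕ A)) :
    hR.splitConfig S (p, s, t) (hR.vertexEquiv x) = Sum.elim p (Sum.elim s t) x := by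
  simp only [splitConfig, MeasurableEquiv.trans_apply, MeasurableEquiv.piCongrLeft_apply_apply]
  rcases x with x | x | x <;> rfl

variable (p : {v // v ∉ A ∧ R v ∉ A} → S) (s t : A → S)

theorem splitConfig_apply_mirror (x : {v // v ∉ A ∧ R v ∉ A}) :
    hR.splitConfig S (p, s, t) x = p x :=
  hR.splitConfig_apply_vertexEquiv p s t (.inl x)

theorem splitConfig_apply_mem (a : A) : hR.splitConfig S (p, s, t) a = s a :=
  hR.splitConfig_apply_vertexEquiv p s t (.inr (.inl a))

theorem splitConfig_apply_map_mem (a : A) : hR.splitConfig S (p, s, t) (R a) = t a :=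
  hR.splitConfig_apply_vertexEquiv p s t (.inr (.inr a))

theorem splitConfig_comp : hR.splitConfig S (p, s, t) ∘ R = hR.splitConfig S (p, t, s) := by
  funext v
  obtain ⟨x | a | a, rfl⟩ := hR.vertexEquiv.surjective v <;>
    simp only [vertexEquiv, Equiv.coe_fn_mk, Sum.elim_inl, Sum.elim_inr, Function.comp_apply]
  · rw [hR.map_eq_self x.2.1 x.2.2, splitConfig_apply_mirror, splitConfig_apply_mirror]
  · rw [splitConfig_apply_map_mem, splitConfig_apply_mem]
  · rw [hR.involutive, splitConfig_apply_mem, splitConfig_apply_map_mem]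

theorem splitConfig_apply_of_notMem (s' : A → S) {v : V} (hv : v ∉ A) :
    hR.splitConfig S (p, s, t) v = hR.splitConfig S (p, s', t) v := by
  obtain ⟨x | a | a, rfl⟩ := hR.vertexEquiv.surjective v
  · exact (hR.splitConfig_apply_mirror p s t x).trans (hR.splitConfig_apply_mirror p s' t x).symm
  · exact absurd a.2 hv
  · exact (hR.splitConfig_apply_map_mem p s t a).trans (hR.splitConfig_apply_map_mem p s' t a).symm

theorem splitConfig_apply_of_map_notMem (t' : A → S) {v : V} (hv : R v ∉ A) :
    hR.splitConfig S (p, s, t) v = hR.splitConfig S (p, s, t') v := by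
  obtain ⟨x | a | a, rfl⟩ := hR.vertexEquiv.surjective v
  · exact (hR.splitConfig_apply_mirror p s t x).trans (hR.splitConfig_apply_mirror p s t' x).symm
  · exact (hR.splitConfig_apply_mem p s t a).trans (hR.splitConfig_apply_mem p s t' a).symm
  · exact absurd (hR.involutive a ▸ a.2) hv

open Classical in
theorem measurePreserving_splitConfig [Fintype V] (μ : Measure S) [SigmaFinite μ] :
    MeasurePreserving (hR.splitConfig S)
      ((Measure.pi fun _ => μ).prod ((Measure.pi fun _ => μ).prod (Measure.pi fun _ => μ)))
      (Measure.pi fun _ => μ) :=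
  (measurePreserving_piCongrLeft (fun _ => μ) hR.vertexEquiv).comp
    ((measurePreserving_sumPiEquivProdPi_symm fun _ => μ).comp
      ((MeasurePreserving.id _).prod (measurePreserving_sumPiEquivProdPi_symm fun _ => μ)))

end splitConfig

section integral

variable [MeasurableSpace S] [Fintype V] [DecidableEq V] [DecidableRel G.Adj] {h : S → S → ℝ}
  {hsymm : ∀ a b, h a b = h b a}

open Classical in
theorem exists_prod_edgeWeight_splitConfig_eq_mul (hR : G.IsReflection R A) [Nonempty (A → S)]
    (hnonneg : ∀ a b, 0 ≤ h a b) :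
    ∃ (w : ({v // v ∉ A ∧ R v ∉ A} → S) → ℝ) (B : ({v // v ∉ A ∧ R v ∉ A} → S) → (A → S) → ℝ),
      (∀ p, 0 ≤ w p) ∧ ∀ p s t,
        ∏ e ∈ G.edgeFinset, edgeWeight h hsymm (hR.splitConfig S (p, s, t)) e =
          w p * (B p s * B p t) := by
  obtain ⟨s₀⟩ := ‹Nonempty (A → S)›
  refine ⟨fun p => ∏ e ∈ G.edgeFinset with ∀ v ∈ e, v ∉ A ∧ R v ∉ A,
      edgeWeight h hsymm (hR.splitConfig S (p, s₀, s₀)) e,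
    fun p s => ∏ e ∈ G.edgeFinset with ∃ v ∈ e, v ∈ A,
      edgeWeight h hsymm (hR.splitConfig S (p, s, s)) e,
    fun p => Finset.prod_nonneg fun e _ => edgeWeight_nonneg hnonneg _ e, fun p s t => ?_⟩
  have half : ∀ s t, ∏ e ∈ G.edgeFinset with ∃ v ∈ e, v ∈ A,
      edgeWeight h hsymm (hR.splitConfig S (p, s, t)) e =
        ∏ e ∈ G.edgeFinset with ∃ v ∈ e, v ∈ A,
          edgeWeight h hsymm (hR.splitConfig S (p, s, s)) e := fun s t => by
    refine Finset.prod_congr rfl fun e he => edgeWeight_congr fun w hw => ?_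
    obtain ⟨he, u, hu, huA⟩ := Finset.mem_filter.1 he
    exact hR.splitConfig_apply_of_map_notMem p s t s
      (hR.map_notMem_of_mem_edgeSet (mem_edgeFinset.1 he) hu huA hw)
  have mirror : ∏ e ∈ G.edgeFinset with ∀ v ∈ e, v ∉ A ∧ R v ∉ A,
      edgeWeight h hsymm (hR.splitConfig S (p, s, t)) e =
        ∏ e ∈ G.edgeFinset with ∀ v ∈ e, v ∉ A ∧ R v ∉ A,
          edgeWeight h hsymm (hR.splitConfig S (p, s₀, s₀)) e := by
    refine Finset.prod_congr rfl fun e he => edgeWeight_congr fun w hw => ?_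
    obtain ⟨hwA, hRwA⟩ := (Finset.mem_filter.1 he).2 w hw
    rw [hR.splitConfig_apply_of_notMem p s t s₀ hwA,
      hR.splitConfig_apply_of_map_notMem p s₀ t s₀ hRwA]
  rw [hR.prod_edgeWeight_eq, splitConfig_comp, half s t, half t s, mirror]
  ring

open Classical in
theorem integral_mul_conj_comp_mul_prod_edgeWeight_nonneg (hR : G.IsReflection R A)
    (μ : Measure S) [SigmaFinite μ] (hnonneg : ∀ a b, 0 ≤ h a b) (f : (V → S) → ℂ)
    (hf : ∀ σ τ : V → S, (∀ v ∉ A, σ v = τ v) → f σ = f τ) :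
    0 ≤ ∫ σ, f σ * starRingEnd ℂ (f (σ ∘ R)) * (∏ e ∈ G.edgeFinset, edgeWeight h hsymm σ e : ℝ)
      ∂Measure.pi fun _ => μ := by
  rcases isEmpty_or_nonempty (V → S) with _ | ⟨⟨σ₀⟩⟩
  · rw [integral_of_isEmpty]
  have : Nonempty (A → S) := ⟨fun a => σ₀ a⟩
  obtain ⟨w, B, hw, hW⟩ := hR.exists_prod_edgeWeight_splitConfig_eq_mul hnonneg (hsymm := hsymm)
  let g p t := f (hR.splitConfig S (p, t, t)) * B p t
  rw [← (hR.measurePreserving_splitConfig μ).integral_comp']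
  refine (integral_mul_conj_mul_nonneg _ _ hw g).trans_eq
    (integral_congr_ae (ae_of_all _ fun ⟨p, s, t⟩ => ?_))
  have hft : f (hR.splitConfig S (p, s, t)) = f (hR.splitConfig S (p, t, t)) :=
    hf _ _ fun v hv => hR.splitConfig_apply_of_notMem p s t t hv
  have hfs : f (hR.splitConfig S (p, t, s)) = f (hR.splitConfig S (p, s, s)) :=
    hf _ _ fun v hv => hR.splitConfig_apply_of_notMem p t s s hv
  simp only [splitConfig_comp, hW, hft, hfs, g, map_mul, Complex.conj_ofReal, Complex.ofReal_mul]
  ring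

end integral

end IsReflection

end SimpleGraph

theorem Function.involutive_update_neg {ι M : Type*} [DecidableEq ι] [InvolutiveNeg M] (i : ι) :
    Function.Involutive fun v : ι → M => Function.update v i (-v i) := fun v => by
  simp

def halfArc (L : ℕ) : Set (ZMod (2 * L)) := {x | 0 < x.val ∧ x.val < L}

section halfArc

variable {L : ℕ} {x y : ZMod (2 * L)}

theorem add_ne_of_mem_halfArc (hx : x ∈ halfArc L) (hy : y ∈ halfArc L) :
    x + y ≠ 0 ∧ x + y ≠ 1 ∧ x + y + 1 ≠ 0 := by
  obtain ⟨hx0, hxL⟩ := hx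
  obtain ⟨hy0, hyL⟩ := hy
  have hxy : (x + y).val = x.val + y.val := ZMod.val_add_of_lt (by omega)
  have h1 : (1 : ZMod (2 * L)).val ≤ 1 := (ZMod.val_one_eq_one_mod _).trans_le (Nat.mod_le _ _)
  refine ⟨fun h => ?_, fun h => ?_, fun h => ?_⟩
  · rw [h, ZMod.val_zero] at hxy; omega
  · rw [h] at hxy; omega
  · have := ZMod.val_add_of_lt (a := x + y) (b := 1) (by omega)
    rw [h, ZMod.val_zero] at this; omega

theorem neg_eq_self_of_notMem_halfArc [NeZero (2 * L)] (hx : x ∉ halfArc L)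
    (hnx : -x ∉ halfArc L) : -x = x := by
  by_cases h0 : x = 0
  · rw [h0, neg_zero]
  apply ZMod.val_injective
  have hlt := ZMod.val_lt x
  have hpos : x.val ≠ 0 := (ZMod.val_ne_zero x).2 h0
  simp only [halfArc, Set.mem_ofPred_eq, ZMod.neg_val, if_neg h0] at hx hnx ⊢
  omega

end halfArc

theorem isReflection_torusGraph {d L : ℕ} [NeZero (2 * L)] (i : Fin d) :
    (torusGraph d (2 * L)).IsReflection (fun v => Function.update v i (-v i))
      {v | v i ∈ halfArc L} := by
  refine ⟨Function.involutive_update_neg i, fun v hv => ?_, fun v hv hRv => ?_, ?_, ?_⟩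
  · simp only [Set.mem_ofPred_eq, Function.update_self] at hv ⊢
    exact fun hnv => (add_ne_of_mem_halfArc hv hnv).1 (add_neg_cancel _)
  · simp only [Set.mem_ofPred_eq, Function.update_self] at hv hRv
    rw [neg_eq_self_of_notMem_halfArc hv hRv, Function.update_eq_self]
  · rintro u v ⟨hne, j, hj, hadj⟩
    refine ⟨(Function.involutive_update_neg i).injective.ne hne, j, fun k hk => ?_, ?_⟩
    · rcases eq_or_ne k i with rfl | hki <;> simp [*, hj k hk]
    · rcases eq_or_ne j i with rfl | hji
      · simp only [Function.update_self]
        rcases hadj with h | h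
        · right; rw [h]; abel
        · left; rw [h]; abel
      · simpa [hji] using hadj
  · rintro u v hu hv ⟨-, j, hj, hadj⟩
    simp only [Set.mem_ofPred_eq, Function.update_self] at hu hv
    obtain ⟨h0, h1, h2⟩ := add_ne_of_mem_halfArc hu hv
    rcases eq_or_ne j i with rfl | hji
    · rcases hadj with h | h
      · exact h1 (by rw [h]; abel)
      · exact h2 (by rw [h]; abel)
    · exact h0 (by rw [hj i (Ne.symm hji)]; abel)

theorem reflection_positivity_through_vertices_general
    (d L : ℕ) (hd : 1 ≤ d) [NeZero (2 * L)]
    {S : Type} [MeasurableSpace S] (lam : Measure S) [IsFiniteMeasure lam]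
    (h : S → S → ℝ)
    (hsymm : ∀ a b, h a b = h b a)
    (hnonneg : ∀ a b, 0 ≤ h a b)
    (f : ((Fin d → ZMod (2 * L)) → S) → ℂ)
    (hfdep : ∀ σ τ : (Fin d → ZMod (2 * L)) → S,
      (∀ v : Fin d → ZMod (2 * L),
        (∀ s : ℕ, 1 ≤ s → s ≤ L - 1 → v ⟨0, hd⟩ ≠ (s : ZMod (2 * L))) → σ v = τ v) →
      f σ = f τ) :
    ∃ r : ℝ, 0 ≤ r ∧
      (∫ σ : (Fin d → ZMod (2 * L)) → S,
          f σ * (starRingEnd ℂ)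
              (f (fun v => σ (Function.update v ⟨0, hd⟩ (-(v ⟨0, hd⟩))))) *
            ((nnWeight d (2 * L) h hsymm σ : ℝ) : ℂ)
        ∂(Measure.pi fun _ : Fin d → ZMod (2 * L) => lam)) /
      (((∫ σ : (Fin d → ZMod (2 * L)) → S, nnWeight d (2 * L) h hsymm σ
        ∂(Measure.pi fun _ : Fin d → ZMod (2 * L) => lam) : ℝ)) : ℂ) = (r : ℂ) := by
  have hf : ∀ σ τ : (Fin d → ZMod (2 * L)) → S,
      (∀ v ∉ {v | v ⟨0, hd⟩ ∈ halfArc L}, σ v = τ v) → f σ = f τ := fun σ τ hστ =>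
    hfdep σ τ fun v hv => hστ v fun ⟨hpos, hlt⟩ =>
      hv _ hpos (by omega) (ZMod.natCast_zmod_val _).symm
  have hnum := (isReflection_torusGraph ⟨0, hd⟩).integral_mul_conj_comp_mul_prod_edgeWeight_nonneg
    lam hnonneg f hf (hsymm := hsymm)
  have hZ : 0 ≤ ∫ σ, nnWeight d (2 * L) h hsymm σ ∂Measure.pi fun _ => lam :=
    integral_nonneg fun σ => Finset.prod_nonneg fun e _ => edgeWeight_nonneg (hsymm := hsymm) hnonneg σ e
  obtain ⟨r, hr, hr_eq⟩ :=
    RCLike.nonneg_iff_exists_ofReal.1 (div_nonneg hnum (Complex.zero_le_real.2 hZ))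
  exact ⟨r, hr, hr_eq.symm⟩

/-- **Reflection positivity through vertices.**  Consider the general nearest-neighbour spin
system on `𝕋_L^d` with finite spin measure space `(S, λ)` and bounded measurable symmetric
non-negative interaction `h` (not essentially zero, and with positive normalizing constant).
Let `V₀ = {v : v₁ ∉ {1,…,L−1}}` and let `R` be the reflection `v₁ ↦ −v₁` (fixing the
hyperplanes `v₁ = 0` and `v₁ = L`).  Then for every bounded measurable `f : S^Λ → ℂ` which
depends only on `σ|_{V₀}`, the expectation `E(f(σ) · conj(f(Rσ)))` is a non-negative real
number.  The expectation is written as the ratio of the integral against the Boltzmann weight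
and the partition function. -/
theorem reflection_positivity_through_vertices
    (d L : ℕ) (hd : 1 ≤ d) (hL : 1 ≤ L) [NeZero (2 * L)]
    {S : Type} [MeasurableSpace S] (lam : Measure S) [IsFiniteMeasure lam]
    (h : S → S → ℝ)
    (hsymm : ∀ a b, h a b = h b a)
    (hnonneg : ∀ a b, 0 ≤ h a b)
    (hbdd : ∃ M : ℝ, ∀ a b, h a b ≤ M)
    (hmeas : Measurable (Function.uncurry h))
    (hne : 0 < ∫ a, ∫ b, h a b ∂lam ∂lam)
    (hZ : 0 < ∫ σ : (Fin d → ZMod (2 * L)) → S, nnWeight d (2 * L) h hsymm σ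
        ∂(Measure.pi fun _ : Fin d → ZMod (2 * L) => lam))
    (f : ((Fin d → ZMod (2 * L)) → S) → ℂ)
    (hfmeas : Measurable f)
    (hfbdd : ∃ M : ℝ, ∀ σ, ‖f σ‖ ≤ M)
    (hfdep : ∀ σ τ : (Fin d → ZMod (2 * L)) → S,
      (∀ v : Fin d → ZMod (2 * L),
        (∀ s : ℕ, 1 ≤ s → s ≤ L - 1 → v ⟨0, hd⟩ ≠ (s : ZMod (2 * L))) → σ v = τ v) →
      f σ = f τ) :
    ∃ r : ℝ, 0 ≤ r ∧
      (∫ σ : (Fin d → ZMod (2 * L)) → S,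
          f σ * (starRingEnd ℂ)
              (f (fun v => σ (Function.update v ⟨0, hd⟩ (-(v ⟨0, hd⟩))))) *
            ((nnWeight d (2 * L) h hsymm σ : ℝ) : ℂ)
        ∂(Measure.pi fun _ : Fin d → ZMod (2 * L) => lam)) /
      (((∫ σ : (Fin d → ZMod (2 * L)) → S, nnWeight d (2 * L) h hsymm σ
        ∂(Measure.pi fun _ : Fin d → ZMod (2 * L) => lam) : ℝ)) : ℂ) = (r : ℂ) :=
  reflection_positivity_through_vertices_general d L hd lam h hsymm hnonneg f hfdep
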